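/- (Theorem 1) Let L be an N×N Laplacian matrix, let P_e be an N×N row stochastic matrix with strictly positive diagonal entries, and suppose that the directed graph on vertices {1, …, N} with an edge from j to i whenever i ≠ j and (P_e)_{ij} > 0 or L_{ij} < 0 contains a directed spanning tree. Let (Δ_k)_{k≥1} be a sequence of impulsive interval lengths satisfying 0 < δ_min ≤ Δ_k ≤ δ_max for all k. Then there exists a vector c ∈ ℝ^N such that the left products ∏_{i=1}^k (P_e · exp(-Δ_i L)) converge to 1_N cᵀ as k → ∞; consequently, for every initial state x_0 ∈ ℝ^N, the iterates x_k = (∏_{i=1}^k P_e exp(-Δ_i L)) x_0 converge to (cᵀ x_0) 1_N, i.e., all components of the state reach a common consensus value cᵀ x_0. -/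

import Mathlib

/-!
Shifting `L` by `α • 1` with `α ≥ max_i L i i` makes `A = α • 1 - L` entrywise nonnegative, and
`exp (-(t • L)) = e^{-tα} exp (t • A) ≥ e^{-δmax α} (1 + δmin • A)` entrywise for
`t ∈ [δmin, δmax]`. So all transition matrices `Pe * exp (-(Δ k • L))` are row stochastic and
dominate one fixed nonnegative matrix `W`, positive on the diagonal and on every edge of the graph.
The spanning tree makes the root column of `W ^ D` positive for some `D`, hence any `D` consecutive
transitions have root column at least some `η > 0`. Such a product shrinks the spread `max - min`
of a vector by the factor `1 - η`, and no stochastic matrix increases it, so along every trajectory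
the maximum and the minimum converge to a common value. Applied to the columns of the products
this gives the limit `1 cᵀ`.
-/

open Matrix Filter Topology
open scoped Nat

theorem Antitone.tendsto_zero_of_le_mul {f : ℕ → ℝ} (hf : Antitone f) (hf0 : ∀ k, 0 ≤ f k)
    {ρ : ℝ} (hρ0 : 0 ≤ ρ) (hρ1 : ρ < 1) {D : ℕ} (hD : ∀ k, f (k + D) ≤ ρ * f k) :
    Tendsto f atTop (𝓝 0) := by
  have hgeom : ∀ n, f (n * D) ≤ ρ ^ n * f 0 := by
    intro n
    induction n with
    | zero => simp
    | succ n ih =>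
      calc f ((n + 1) * D) = f (n * D + D) := by rw [Nat.succ_mul]
        _ ≤ ρ * f (n * D) := hD _
        _ ≤ ρ * (ρ ^ n * f 0) := by gcongr
        _ = ρ ^ (n + 1) * f 0 := by ring
  have hlim := tendsto_atTop_ciInf hf ⟨0, by rintro _ ⟨k, rfl⟩; exact hf0 k⟩
  have hinf : ⨅ k, f k = 0 := by
    refine le_antisymm ?_ (le_ciInf hf0)
    refine ge_of_tendsto' (by simpa using
      (tendsto_pow_atTop_nhds_zero_of_lt_one hρ0 hρ1).mul_const (f 0)) fun n => ?_
    exact (ciInf_le ⟨0, by rintro _ ⟨k, rfl⟩; exact hf0 k⟩ _).trans (hgeom n)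
  rwa [hinf] at hlim

namespace Matrix

section Nonneg

variable {l m n : Type*} [Fintype m]

theorem mul_apply_nonneg {A : Matrix l m ℝ} {B : Matrix m n ℝ} (hA : ∀ i j, 0 ≤ A i j)
    (hB : ∀ i j, 0 ≤ B i j) (i : l) (j : n) : 0 ≤ (A * B) i j :=
  Finset.sum_nonneg fun k _ => mul_nonneg (hA i k) (hB k j)

theorem mul_apply_le_mul_apply {A A' : Matrix l m ℝ} {B B' : Matrix m n ℝ}
    (hA : ∀ i j, 0 ≤ A i j) (hB : ∀ i j, 0 ≤ B i j) (hAA' : ∀ i j, A i j ≤ A' i j)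
    (hBB' : ∀ i j, B i j ≤ B' i j) (i : l) (j : n) : (A * B) i j ≤ (A' * B') i j :=
  Finset.sum_le_sum fun k _ =>
    mul_le_mul (hAA' i k) (hBB' k j) (hB k j) ((hA i k).trans (hAA' i k))

theorem apply_mul_apply_le_mul_apply {A : Matrix l m ℝ} {B : Matrix m n ℝ}
    (hA : ∀ i j, 0 ≤ A i j) (hB : ∀ i j, 0 ≤ B i j) (i : l) (k : m) (j : n) :
    A i k * B k j ≤ (A * B) i j :=
  Finset.single_le_sum (f := fun k => A i k * B k j) (fun k _ => mul_nonneg (hA i k) (hB k j))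
    (Finset.mem_univ k)

theorem mul_apply_pos {A : Matrix l m ℝ} {B : Matrix m n ℝ} (hA : ∀ i j, 0 ≤ A i j)
    (hB : ∀ i j, 0 ≤ B i j) {i : l} {k : m} {j : n} (hik : 0 < A i k) (hkj : 0 < B k j) :
    0 < (A * B) i j :=
  (mul_pos hik hkj).trans_le (apply_mul_apply_le_mul_apply hA hB i k j)

end Nonneg

section Exp

variable {ι : Type*} [Fintype ι] [DecidableEq ι]

theorem hasSum_exp (A : Matrix ι ι ℝ) :
    HasSum (fun n : ℕ => (n ! : ℝ)⁻¹ • A ^ n) (NormedSpace.exp A) := by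
  -- `NormedSpace.exp` does not depend on the norm; any Banach algebra norm gives the series.
  let _ : NormedRing (Matrix ι ι ℝ) := Matrix.linftyOpNormedRing
  let _ : NormedAlgebra ℝ (Matrix ι ι ℝ) := Matrix.linftyOpNormedAlgebra
  exact NormedSpace.exp_series_hasSum_exp' A

theorem one_add_le_exp_apply {A : Matrix ι ι ℝ} (hA : ∀ i j, 0 ≤ A i j) (i j : ι) :
    (1 + A) i j ≤ NormedSpace.exp A i j := by
  have h := Pi.hasSum.1 (Pi.hasSum.1 (hasSum_exp A) i) j
  have := sum_le_hasSum (Finset.range 2)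
    (fun n _ => mul_nonneg (by positivity) (pow_apply_nonneg hA n i j)) h
  simpa [Finset.sum_range_succ] using this

theorem exp_mulVec_eq_self {A : Matrix ι ι ℝ} {v : ι → ℝ} (hAv : A *ᵥ v = 0) :
    NormedSpace.exp A *ᵥ v = v := by
  have h := (hasSum_exp A).map (mulVec.addMonoidHomLeft v)
    (continuous_id.matrix_mulVec continuous_const)
  refine h.unique ?_
  convert hasSum_ite_eq 0 v with n
  rcases n with _ | n
  · simp [mulVec.addMonoidHomLeft]
  · simp [mulVec.addMonoidHomLeft, smul_mulVec, pow_succ, ← mulVec_mulVec, hAv]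

theorem exp_add_smul_one (A : Matrix ι ι ℝ) (c : ℝ) :
    NormedSpace.exp (A + c • 1) = Real.exp c • NormedSpace.exp A := by
  rw [exp_add_of_commute _ _ ((Commute.one_right A).smul_right c), smul_one_eq_diagonal,
    exp_diagonal]
  have : NormedSpace.exp (fun _ : ι => c) = fun _ => Real.exp c :=
    funext fun _ => by rw [Pi.coe_exp, Real.exp_eq_exp_ℝ]
  rw [this, ← smul_one_eq_diagonal, mul_smul_comm, mul_one]

theorem le_exp_smul_sub_smul_one {A : Matrix ι ι ℝ} (hA : ∀ i j, 0 ≤ A i j) {α δ δ' t : ℝ}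
    (hα : 0 ≤ α) (hδ : 0 ≤ δ) (hδt : δ ≤ t) (htδ' : t ≤ δ') (i j : ι) :
    Real.exp (-(δ' * α)) * (1 + δ • A) i j ≤ NormedSpace.exp (t • (A - α • 1)) i j := by
  have htA : ∀ i j, 0 ≤ (t • A) i j := fun i j => mul_nonneg (hδ.trans hδt) (hA i j)
  have hsplit : t • (A - α • 1) = t • A + (-(t * α)) • (1 : Matrix ι ι ℝ) := by
    rw [smul_sub, smul_smul]; module
  rw [hsplit, exp_add_smul_one, smul_apply, smul_eq_mul]
  calc Real.exp (-(δ' * α)) * (1 + δ • A) i j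
      ≤ Real.exp (-(t * α)) * (1 + t • A) i j := by
        gcongr
        · exact add_nonneg (zero_le_one_elem i j) (mul_nonneg hδ (hA i j))
        · simp only [add_apply, smul_apply, smul_eq_mul]
          gcongr
          exact hA i j
    _ ≤ Real.exp (-(t * α)) * NormedSpace.exp (t • A) i j := by
        gcongr
        exact one_add_le_exp_apply htA i j

theorem exists_le_exp_neg_smul {L : Matrix ι ι ℝ} (hL : ∀ i j, i ≠ j → L i j ≤ 0)
    (hL1 : L *ᵥ 1 = 0) {δ : ℝ} (hδ : 0 < δ) (δ' : ℝ) :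
    ∃ F : Matrix ι ι ℝ,
      (∀ i j, 0 ≤ F i j) ∧ (∀ i, 0 < F i i) ∧ (∀ i j, L i j < 0 → 0 < F i j) ∧
      ∀ t, δ ≤ t → t ≤ δ' → NormedSpace.exp (-(t • L)) ∈ rowStochastic ℝ ι ∧
        ∀ i j, F i j ≤ NormedSpace.exp (-(t • L)) i j := by
  obtain ⟨α, hα0, hα⟩ : ∃ α, 0 ≤ α ∧ ∀ i, L i i ≤ α := by
    obtain ⟨α, hα⟩ := Finite.bddAbove_range fun i => L i i
    exact ⟨max α 0, le_max_right _ _, fun i => (hα ⟨i, rfl⟩).trans (le_max_left _ _)⟩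
  set A : Matrix ι ι ℝ := α • 1 - L
  have hAL : ∀ i j, -L i j ≤ A i j := by
    intro i j
    rcases eq_or_ne i j with rfl | hij
    · simpa [A] using hα0
    · simp [A, hij]
  have hA : ∀ i j, 0 ≤ A i j := by
    intro i j
    rcases eq_or_ne i j with rfl | hij
    · simpa [A] using hα i
    · simpa [A, hij] using hL i j hij
  have hG : ∀ i j, 0 ≤ (1 + δ • A) i j := fun i j =>
    add_nonneg (zero_le_one_elem i j) (mul_nonneg hδ.le (hA i j))
  have hlower : ∀ t, δ ≤ t → t ≤ δ' → ∀ i j,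
      Real.exp (-(δ' * α)) * (1 + δ • A) i j ≤ NormedSpace.exp (-(t • L)) i j := by
    intro t hδt htδ' i j
    rw [show -(t • L) = t • (A - α • 1) by simp [A]]
    exact le_exp_smul_sub_smul_one hA hα0 hδ.le hδt htδ' i j
  refine ⟨Real.exp (-(δ' * α)) • (1 + δ • A), fun i j => ?_, fun i => ?_, fun i j hLij => ?_,
    fun t hδt htδ' => ⟨?_, hlower t hδt htδ'⟩⟩
  · exact mul_nonneg (Real.exp_pos _).le (hG i j)
  · refine mul_pos (Real.exp_pos _) ?_
    simpa using add_pos_of_pos_of_nonneg one_pos (mul_nonneg hδ.le (hA i i))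
  · refine mul_pos (Real.exp_pos _) (add_pos_of_nonneg_of_pos (zero_le_one_elem i j) ?_)
    exact mul_pos hδ ((neg_pos.2 hLij).trans_le (hAL i j))
  · refine mem_rowStochastic.2 ⟨fun i j => ?_, exp_mulVec_eq_self ?_⟩
    · exact (mul_nonneg (Real.exp_pos _).le (hG i j)).trans (hlower t hδt htδ' i j)
    · simp [neg_mulVec, smul_mulVec, hL1]

end Exp

section Consensus

variable {ι : Type*} [Fintype ι] [DecidableEq ι]

theorem eventually_pow_apply_pos {W : Matrix ι ι ℝ} (hW : ∀ i j, 0 ≤ W i j)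
    (hdiag : ∀ i, 0 < W i i) {r i : ι} (h : Relation.ReflTransGen (fun j i => 0 < W i j) r i) :
    ∀ᶠ n in atTop, 0 < (W ^ n) i r := by
  induction h with
  | refl =>
    refine Eventually.of_forall fun n => ?_
    induction n with
    | zero => simp
    | succ n ih => rw [pow_succ']; exact mul_apply_pos hW (pow_apply_nonneg hW n) (hdiag r) ih
  | tail _ hij ih =>
    obtain ⟨d, hd⟩ := eventually_atTop.1 ih
    refine eventually_atTop.2 ⟨d + 1, fun n hn => ?_⟩
    obtain ⟨m, rfl⟩ : ∃ m, n = m + 1 := ⟨n - 1, by omega⟩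
    rw [pow_succ']
    exact mul_apply_pos hW (pow_apply_nonneg hW m) hij (hd m (by omega))

theorem exists_pow_apply_pos {W : Matrix ι ι ℝ} (hW : ∀ i j, 0 ≤ W i j)
    (hdiag : ∀ i, 0 < W i i) {r : ι} (h : ∀ i, Relation.ReflTransGen (fun j i => 0 < W i j) r i) :
    ∃ D, ∀ i, 0 < (W ^ D) i r :=
  (eventually_all.2 fun i => eventually_pow_apply_pos hW hdiag (h i)).exists

theorem mulVec_apply_le_of_le {B : Matrix ι ι ℝ} (hB : B ∈ rowStochastic ℝ ι) {η : ℝ} {r : ι}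
    (hη : ∀ i, η ≤ B i r) {x : ι → ℝ} {u : ℝ} (hxu : ∀ j, x j ≤ u) (i : ι) :
    (B *ᵥ x) i ≤ η * x r + (1 - η) * u := by
  have hw : ∀ j, 0 ≤ B i j - (Pi.single r η : ι → ℝ) j := by
    intro j
    rcases eq_or_ne j r with rfl | hjr
    · simpa using hη i
    · simpa [hjr] using nonneg_of_mem_rowStochastic hB
  calc (B *ᵥ x) i = η * x r + ∑ j, (B i j - (Pi.single r η : ι → ℝ) j) * x j := by
        simp [mulVec, dotProduct, sub_mul, Finset.sum_sub_distrib, Pi.single_apply]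
    _ ≤ η * x r + ∑ j, (B i j - (Pi.single r η : ι → ℝ) j) * u := by
        gcongr with j
        exacts [hw j, hxu j]
    _ = η * x r + (1 - η) * u := by
        rw [← Finset.sum_mul, Finset.sum_sub_distrib, sum_row_of_mem_rowStochastic hB,
          Finset.sum_pi_single', if_pos (Finset.mem_univ r)]

theorem le_mulVec_apply_of_le {B : Matrix ι ι ℝ} (hB : B ∈ rowStochastic ℝ ι) {η : ℝ} {r : ι}
    (hη : ∀ i, η ≤ B i r) {x : ι → ℝ} {l : ℝ} (hlx : ∀ j, l ≤ x j) (i : ι) :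
    η * x r + (1 - η) * l ≤ (B *ᵥ x) i := by
  have := mulVec_apply_le_of_le hB hη (x := -x) (u := -l) (fun j => neg_le_neg (hlx j)) i
  simp only [mulVec_neg, Pi.neg_apply] at this
  linarith

theorem exists_mem_rowStochastic_eq_mulVec {M : ℕ → Matrix ι ι ℝ}
    (hM : ∀ k, M k ∈ rowStochastic ℝ ι) {W : Matrix ι ι ℝ} (hW : ∀ i j, 0 ≤ W i j)
    (hWM : ∀ k i j, W i j ≤ M k i j) {x : ℕ → ι → ℝ} (hx : ∀ k, x (k + 1) = M k *ᵥ x k)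
    (k n : ℕ) :
    ∃ Q ∈ rowStochastic ℝ ι, (∀ i j, (W ^ n) i j ≤ Q i j) ∧ x (k + n) = Q *ᵥ x k := by
  induction n with
  | zero => exact ⟨1, one_mem _, by simp, by simp⟩
  | succ n ih =>
    obtain ⟨Q, hQ, hWQ, hxQ⟩ := ih
    refine ⟨M (k + n) * Q, mul_mem (hM _) hQ, fun i j => ?_, ?_⟩
    · rw [pow_succ']
      exact mul_apply_le_mul_apply hW (pow_apply_nonneg hW n) (hWM _) hWQ i j
    · rw [← add_assoc, hx, hxQ, mulVec_mulVec]

theorem exists_tendsto_const_of_mulVec [Nonempty ι] {M : ℕ → Matrix ι ι ℝ}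
    (hM : ∀ k, M k ∈ rowStochastic ℝ ι) {W : Matrix ι ι ℝ} (hW : ∀ i j, 0 ≤ W i j)
    (hWM : ∀ k i j, W i j ≤ M k i j) {r : ι} {D : ℕ} (hD : ∀ i, 0 < (W ^ D) i r)
    {x : ℕ → ι → ℝ} (hx : ∀ k, x (k + 1) = M k *ᵥ x k) :
    ∃ a : ℝ, Tendsto x atTop (𝓝 fun _ => a) := by
  set u : ℕ → ℝ := fun k => ⨆ i, x k i
  set l : ℕ → ℝ := fun k => ⨅ i, x k i
  have hxu : ∀ k i, x k i ≤ u k := fun k i => le_ciSup (Finite.bddAbove_range _) i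
  have hlx : ∀ k i, l k ≤ x k i := fun k i => ciInf_le (Finite.bddBelow_range _) i
  have hM0 : ∀ k i, (0 : ℝ) ≤ M k i r := fun k i => nonneg_of_mem_rowStochastic (hM k)
  have hu : Antitone u := antitone_nat_of_succ_le fun k => ciSup_le fun i => by
    simpa [hx] using mulVec_apply_le_of_le (hM k) (hM0 k) (hxu k) i
  have hl : Monotone l := monotone_nat_of_le_succ fun k => le_ciInf fun i => by
    simpa [hx] using le_mulVec_apply_of_le (hM k) (hM0 k) (hlx k) i
  have hspread : ∀ k, 0 ≤ u k - l k := fun k => sub_nonneg.2 ((hlx k r).trans (hxu k r))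
  obtain ⟨i₀, hi₀⟩ := exists_eq_ciInf_of_finite (f := fun i => (W ^ D) i r)
  set η := ⨅ i, (W ^ D) i r
  have hηD : ∀ i, η ≤ (W ^ D) i r := fun i => ciInf_le (Finite.bddBelow_range _) i
  have hη : 0 < η := hi₀ ▸ hD i₀
  have hη1 : η ≤ 1 := by
    obtain ⟨Q, hQ, hWQ, -⟩ := exists_mem_rowStochastic_eq_mulVec hM hW hWM hx 0 D
    exact (hηD r).trans ((hWQ r r).trans (le_one_of_mem_rowStochastic hQ))
  have hcontract : ∀ k, u (k + D) - l (k + D) ≤ (1 - η) * (u k - l k) := by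
    intro k
    obtain ⟨Q, hQ, hWQ, hxQ⟩ := exists_mem_rowStochastic_eq_mulVec hM hW hWM hx k D
    have hηQ : ∀ i, η ≤ Q i r := fun i => (hηD i).trans (hWQ i r)
    have hup : u (k + D) ≤ η * x k r + (1 - η) * u k :=
      ciSup_le fun i => hxQ ▸ mulVec_apply_le_of_le hQ hηQ (hxu k) i
    have hlow : η * x k r + (1 - η) * l k ≤ l (k + D) :=
      le_ciInf fun i => hxQ ▸ le_mulVec_apply_of_le hQ hηQ (hlx k) i
    linarith
  have hosc : Tendsto (fun k => u k - l k) atTop (𝓝 0) :=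
    Antitone.tendsto_zero_of_le_mul (fun k k' hk => sub_le_sub (hu hk) (hl hk)) hspread
      (by linarith) (by linarith) hcontract
  have hu_lim : Tendsto u atTop (𝓝 (⨅ k, u k)) :=
    tendsto_atTop_ciInf hu ⟨l 0, by
      rintro _ ⟨k, rfl⟩
      linarith [hl k.zero_le, hspread k]⟩
  have hl_lim : Tendsto l atTop (𝓝 (⨅ k, u k)) := by simpa using hu_lim.sub hosc
  exact ⟨⨅ k, u k, tendsto_pi_nhds.2 fun i =>
    tendsto_of_tendsto_of_tendsto_of_le_of_le hl_lim hu_lim (fun k => hlx k i) fun k => hxu k i⟩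

theorem exists_tendsto_listProd [Nonempty ι] {M : ℕ → Matrix ι ι ℝ}
    (hM : ∀ k, M k ∈ rowStochastic ℝ ι) {W : Matrix ι ι ℝ} (hW : ∀ i j, 0 ≤ W i j)
    (hWM : ∀ k i j, W i j ≤ M k i j) {r : ι} {D : ℕ} (hD : ∀ i, 0 < (W ^ D) i r) :
    ∃ c : ι → ℝ, Tendsto (fun k => ((List.range k).reverse.map M).prod) atTop
      (𝓝 (of fun _ j => c j)) := by
  set P : ℕ → Matrix ι ι ℝ := fun k => ((List.range k).reverse.map M).prod
  have hP : ∀ k, P (k + 1) = M k * P k := by simp [P, List.range_succ]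
  have hcol : ∀ j, ∃ a : ℝ, Tendsto (fun k => (P k).col j) atTop (𝓝 fun _ => a) := fun j =>
    exists_tendsto_const_of_mulVec hM hW hWM hD fun k => by
      rw [← mulVec_single_one, hP, ← mulVec_mulVec, mulVec_single_one]
  choose c hc using hcol
  exact ⟨c, tendsto_pi_nhds.2 fun i => tendsto_pi_nhds.2 fun j => tendsto_pi_nhds.1 (hc j) i⟩

end Consensus

end Matrix

/-- **Theorem 1.** Let `L` be an `N × N` Laplacian matrix and `Pe` a row stochastic
matrix with strictly positive diagonal entries, and suppose the directed graph with an edge from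
`j` to `i` whenever `i ≠ j` and (`Pe i j > 0` or `L i j < 0`) contains a directed spanning tree.
If the impulsive interval lengths `Δ k` satisfy `0 < δmin ≤ Δ k ≤ δmax`, then the left products
`∏_{i=1}^k Pe * exp (-Δ i • L)` converge to `1_N cᵀ` for some `c`, and consequently for every
initial state `x₀` the iterates converge to the consensus vector `(cᵀ x₀) 1_N`. -/
theorem clustered_network_consensus (N : ℕ) (L Pe : Matrix (Fin N) (Fin N) ℝ)
    (hLoff : ∀ i j : Fin N, i ≠ j → L i j ≤ 0)
    (hLrow : ∀ i : Fin N, ∑ j, L i j = 0)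
    (hPnn : ∀ i j : Fin N, 0 ≤ Pe i j)
    (hProw : ∀ i : Fin N, ∑ j, Pe i j = 1)
    (hPdiag : ∀ i : Fin N, 0 < Pe i i)
    (htree : ∃ r : Fin N, ∀ i : Fin N,
      Relation.ReflTransGen (fun j i : Fin N => i ≠ j ∧ (0 < Pe i j ∨ L i j < 0)) r i)
    (Δ : ℕ → ℝ) (δmin δmax : ℝ) (hδmin : 0 < δmin)
    (hΔ : ∀ k : ℕ, δmin ≤ Δ k ∧ Δ k ≤ δmax) :
    ∃ c : Fin N → ℝ,
      Tendsto
        (fun k : ℕ =>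
          ((List.range k).reverse.map fun i => Pe * NormedSpace.exp (-(Δ i • L))).prod)
        atTop (𝓝 (Matrix.of fun _ j : Fin N => c j)) ∧
      ∀ x₀ : Fin N → ℝ,
        Tendsto
          (fun k : ℕ =>
            (((List.range k).reverse.map fun i =>
              Pe * NormedSpace.exp (-(Δ i • L))).prod).mulVec x₀)
          atTop (𝓝 (fun _ : Fin N => c ⬝ᵥ x₀)) := by
  obtain ⟨r, hr⟩ := htree
  have : Nonempty (Fin N) := ⟨r⟩
  have hL1 : L *ᵥ 1 = 0 := funext fun i => by simp [mulVec, dotProduct, hLrow]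
  obtain ⟨F, hF, hFdiag, hFL, hE⟩ := exists_le_exp_neg_smul hLoff hL1 hδmin δmax
  have hPe : Pe ∈ rowStochastic ℝ (Fin N) := mem_rowStochastic_iff_sum.2 ⟨hPnn, hProw⟩
  have hW : ∀ i j, 0 ≤ (Pe * F) i j := mul_apply_nonneg hPnn hF
  have hWdiag : ∀ i, 0 < (Pe * F) i i := fun i => mul_apply_pos hPnn hF (hPdiag i) (hFdiag i)
  have hedge : ∀ j i, i ≠ j ∧ (0 < Pe i j ∨ L i j < 0) → 0 < (Pe * F) i j := by
    rintro j i ⟨-, hPij | hLij⟩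
    exacts [mul_apply_pos hPnn hF hPij (hFdiag j),
      mul_apply_pos hPnn hF (hPdiag i) (hFL i j hLij)]
  obtain ⟨D, hD⟩ :=
    exists_pow_apply_pos hW hWdiag fun i => Relation.ReflTransGen.mono hedge _ _ (hr i)
  obtain ⟨c, hc⟩ := exists_tendsto_listProd (M := fun k => Pe * NormedSpace.exp (-(Δ k • L)))
    (fun k => mul_mem hPe ((hE _ (hΔ k).1 (hΔ k).2).1)) hW
    (fun k => mul_apply_le_mul_apply hPnn hF (fun _ _ => le_rfl) (hE _ (hΔ k).1 (hΔ k).2).2) hD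
  exact ⟨c, hc, fun x₀ => ((continuous_id.matrix_mulVec continuous_const).tendsto _).comp hc⟩
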